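/- arXiv:2111.00785 — 8 statements merged into one kernel-verified Lean document; each statement's English description precedes it below -/
import Mathlib

section
/- Let A be a finite-dimensional commutative ℂ-algebra and V an s-dimensional ℂ-vector space with basis e₁, …, e_s. Let θ, ϑ ∈ Z²(A, V) be written θ(x, y) = Σᵢ θᵢ(x, y) eᵢ and ϑ(x, y) = Σᵢ ϑᵢ(x, y) eᵢ with θᵢ, ϑᵢ ∈ Z²(A, ℂ). Assume Ann(θ) ∩ Ann(A) = 0 and Ann(ϑ) ∩ Ann(A) = 0, and that the classes [θ₁], …, [θ_s] are linearly independent in H²(A, ℂ) and likewise [ϑ₁], …, [ϑ_s]. Then the central extensions A_θ and A_ϑ are isomorphic as ℂ-algebras if and only if there exists an algebra automorphism φ of A such that the subspaces of H²(A, ℂ) spanned by [θ₁ ∘ (φ × φ)], …, [θ_s ∘ (φ × φ)] and by [ϑ₁], …, [ϑ_s] coincide. -/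
/-!
Because `Ann(ϑ) ∩ Ann(A) = 0`, the annihilator of `A_ϑ` is exactly `V`, and likewise for `A_θ`.
An isomorphism of the central extensions therefore maps `V` onto `V`, i.e. it is block triangular,
`(x, u) ↦ (e x, ψ x + ω u)` with `e ∈ Aut(A)` and `ω ∈ GL(V)`; such a map is an isomorphism
`A_ϑ → A_θ` exactly when `θ (e x) (e y) = ω (ϑ x y) + ψ (x y)`, i.e. `[θ ∘ (e × e)] = ω [ϑ]`.
In coordinates, if `θ ∘ (e × e) ≡ C ϑ` and `ϑ ≡ D (θ ∘ (e × e))` modulo `B²(A, V)`, then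
`(1 - D C) ϑ ≡ 0`, so the independence of the `[ϑⱼ]` forces `D C = 1` and `C` is invertible.
-/

open Matrix

section LinearAlgebra

variable {K A V : Type*} [Semiring K] [AddCommMonoid A] [Module K A]

theorem LinearMap.apply_eq_of_fst_apply_inr_eq_zero [AddCommMonoid V] [Module K V]
    (G : (A × V) →ₗ[K] (A × V)) (hG : ∀ u, (G (0, u)).1 = 0) (p : A × V) :
    G p = ((G (p.1, 0)).1, (G (0, p.2)).2 + (G (p.1, 0)).2) := by
  conv_lhs => rw [← Prod.fst_add_snd p]
  rw [map_add, Prod.ext_iff, Prod.fst_add, Prod.snd_add, hG, add_zero, add_comm]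
  exact ⟨rfl, rfl⟩

theorem LinearEquiv.exists_eq_skewProd [AddCommGroup V] [Module K V] (F : (A × V) ≃ₗ[K] (A × V))
    (hF : ∀ u, (F (0, u)).1 = 0) (hF' : ∀ u, (F.symm (0, u)).1 = 0) :
    ∃ (e : A ≃ₗ[K] A) (ω : V ≃ₗ[K] V) (ψ : A →ₗ[K] V), F = e.skewProd ω ψ := by
  have fst_eq : ∀ G : (A × V) ≃ₗ[K] (A × V), (∀ u, (G (0, u)).1 = 0) →
      ∀ p, (G p).1 = (G (p.1, 0)).1 :=
    fun G hG p =>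
      (congrArg Prod.fst (G.toLinearMap.apply_eq_of_fst_apply_inr_eq_zero hG p)).trans rfl
  have inr_eq : ∀ G : (A × V) ≃ₗ[K] (A × V), (∀ u, (G (0, u)).1 = 0) →
      ∀ u, G (0, u) = (0, (G (0, u)).2) :=
    fun G hG u => Prod.ext (hG u) rfl
  let e : A ≃ₗ[K] A := .ofLinearMap (LinearMap.fst K A V ∘ₗ F.toLinearMap ∘ₗ LinearMap.inl K A V)
    (LinearMap.fst K A V ∘ₗ F.symm.toLinearMap ∘ₗ LinearMap.inl K A V)
    (LinearMap.ext fun x => by simpa using (fst_eq F hF (F.symm (x, 0))).symm)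
    (LinearMap.ext fun x => by simpa using (fst_eq F.symm hF' (F (x, 0))).symm)
  let ω : V ≃ₗ[K] V := .ofLinearMap (LinearMap.snd K A V ∘ₗ F.toLinearMap ∘ₗ LinearMap.inr K A V)
    (LinearMap.snd K A V ∘ₗ F.symm.toLinearMap ∘ₗ LinearMap.inr K A V)
    (LinearMap.ext fun u => by simp [← inr_eq F.symm hF'])
    (LinearMap.ext fun u => by simp [← inr_eq F hF])
  refine ⟨e, ω, LinearMap.snd K A V ∘ₗ F.toLinearMap ∘ₗ LinearMap.inl K A V, ?_⟩
  exact LinearEquiv.ext (F.toLinearMap.apply_eq_of_fst_apply_inr_eq_zero hF)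

end LinearAlgebra

section CentralExtension

variable {K A V : Type*} [CommSemiring K] [NonUnitalNonAssocRing A] [Module K A]
  [AddCommGroup V] [Module K V]

def IsCentralExtensionIso (θ ϑ : A →ₗ[K] A →ₗ[K] V) (E : (A × V) ≃ₗ[K] (A × V)) : Prop :=
  ∀ p q : A × V, E (p.1 * q.1, θ p.1 q.1) = ((E p).1 * (E q).1, ϑ (E p).1 (E q).1)

variable {θ ϑ : A →ₗ[K] A →ₗ[K] V}

namespace IsCentralExtensionIso

variable {E : (A × V) ≃ₗ[K] (A × V)}

theorem symm (hE : IsCentralExtensionIso θ ϑ E) : IsCentralExtensionIso ϑ θ E.symm := by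
  intro p q
  apply E.injective
  rw [E.apply_symm_apply, hE]
  simp

theorem fst_apply_inr_eq_zero (hE : IsCentralExtensionIso θ ϑ E)
    (hϑ : ∀ x, (∀ y, ϑ x y = 0) → (∀ y, x * y = 0) → x = 0) (u : V) : (E (0, u)).1 = 0 := by
  -- `(0, u)` annihilates `A_θ`, so `E (0, u)` annihilates `A_ϑ`.
  have hu : ∀ y, (E (0, u)).1 * y = 0 ∧ ϑ (E (0, u)).1 y = 0 := fun y => by
    have h := hE (0, u) (E.symm (y, 0))
    simp only [zero_mul, map_zero, LinearMap.zero_apply, E.apply_symm_apply] at h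
    rw [← Prod.zero_eq_mk, map_zero, Prod.ext_iff] at h
    exact ⟨h.1.symm, h.2.symm⟩
  exact hϑ _ (fun y => (hu y).2) (fun y => (hu y).1)

end IsCentralExtensionIso

theorem isCentralExtensionIso_skewProd_iff (e : A ≃ₗ[K] A) (ω : V ≃ₗ[K] V) (ψ : A →ₗ[K] V) :
    IsCentralExtensionIso ϑ θ (e.skewProd ω ψ) ↔
      (∀ x y, e (x * y) = e x * e y) ∧ ∀ x y, θ (e x) (e y) = ω (ϑ x y) + ψ (x * y) := by
  constructor
  · intro h
    have hxy := fun x y => Prod.ext_iff.1 (h (x, 0) (y, 0))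
    simp only [LinearEquiv.skewProd_apply, map_zero] at hxy
    exact ⟨fun x y => (hxy x y).1, fun x y => (hxy x y).2.symm⟩
  · rintro ⟨he, hθ⟩ p q
    simp [he, hθ]

theorem exists_isCentralExtensionIso_iff
    (hθ : ∀ x, (∀ y, θ x y = 0) → (∀ y, x * y = 0) → x = 0)
    (hϑ : ∀ x, (∀ y, ϑ x y = 0) → (∀ y, x * y = 0) → x = 0) :
    (∃ E, IsCentralExtensionIso θ ϑ E) ↔ ∃ e : A ≃ₗ[K] A, (∀ x y, e (x * y) = e x * e y) ∧
      ∃ (ω : V ≃ₗ[K] V) (ψ : A →ₗ[K] V), ∀ x y, θ (e x) (e y) = ω (ϑ x y) + ψ (x * y) := by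
  constructor
  · rintro ⟨E, hE⟩
    obtain ⟨e, ω, ψ, hF⟩ := E.symm.exists_eq_skewProd (hE.symm.fst_apply_inr_eq_zero hθ)
      (hE.fst_apply_inr_eq_zero hϑ)
    obtain ⟨he, hθϑ⟩ := (isCentralExtensionIso_skewProd_iff e ω ψ).1 (hF ▸ hE.symm)
    exact ⟨e, he, ω, ψ, hθϑ⟩
  · rintro ⟨e, he, ω, ψ, hθϑ⟩
    exact ⟨_, ((isCentralExtensionIso_skewProd_iff e ω ψ).2 ⟨he, hθϑ⟩).symm⟩

end CentralExtension

section Coordinates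

variable {K A ι : Type*}

def LinearMap.pi₂ [CommSemiring K] [AddCommMonoid A] [Module K A] (θ : ι → A →ₗ[K] A →ₗ[K] K) :
    A →ₗ[K] A →ₗ[K] ι → K :=
  LinearMap.mk₂ K (fun x y i => θ i x y) (by intros; ext; simp) (by intros; ext; simp)
    (by intros; ext; simp) (by intros; ext; simp)

variable [Fintype ι] [Mul A]

theorem forall_exists_sum_add_iff_exists_mulVec_add [CommSemiring K] [AddCommMonoid A]
    [Module K A] (θ ϑ : ι → A → A → K) :
    (∀ i, ∃ (c : ι → K) (f : A →ₗ[K] K), ∀ x y, θ i x y = ∑ j, c j * ϑ j x y + f (x * y)) ↔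
      ∃ (C : Matrix ι ι K) (F : A →ₗ[K] ι → K),
        ∀ x y, (fun i => θ i x y) = C *ᵥ (fun j => ϑ j x y) + F (x * y) := by
  constructor
  · intro h
    choose c f hcf using h
    exact ⟨Matrix.of c, LinearMap.pi f, fun x y => funext fun i => hcf i x y⟩
  · rintro ⟨C, F, hCF⟩ i
    exact ⟨C i, LinearMap.proj (R := K) (φ := fun _ : ι => K) i ∘ₗ F,
      fun x y => congrFun (hCF x y) i⟩

theorem exists_linearEquiv_iff_exists_mulVec_and_exists_mulVec [CommRing K] [AddCommMonoid A]
    [Module K A] [DecidableEq ι] {Θ Φ : A → A → ι → K}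
    (hΦ : ∀ c : ι → K, (∃ f : A →ₗ[K] K, ∀ x y, c ⬝ᵥ Φ x y = f (x * y)) → c = 0) :
    (∃ (ω : (ι → K) ≃ₗ[K] (ι → K)) (ψ : A →ₗ[K] ι → K), ∀ x y, Θ x y = ω (Φ x y) + ψ (x * y)) ↔
      (∃ (C : Matrix ι ι K) (F : A →ₗ[K] ι → K), ∀ x y, Θ x y = C *ᵥ Φ x y + F (x * y)) ∧
      (∃ (D : Matrix ι ι K) (G : A →ₗ[K] ι → K), ∀ x y, Φ x y = D *ᵥ Θ x y + G (x * y)) := by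
  constructor
  · rintro ⟨ω, ψ, h⟩
    refine ⟨⟨LinearMap.toMatrix' ω, ψ, fun x y => by rw [LinearMap.toMatrix'_mulVec, h]; rfl⟩,
      ⟨LinearMap.toMatrix' ω.symm, -(ω.symm.toLinearMap ∘ₗ ψ), fun x y => ?_⟩⟩
    simp [LinearMap.toMatrix'_mulVec, h]
  · rintro ⟨⟨C, F, hC⟩, ⟨D, G, hD⟩⟩
    have hrow : ∀ x y, (1 - D * C) *ᵥ Φ x y = (toLin' D ∘ₗ F + G) (x * y) := by
      intro x y
      have hΦ := hD x y
      rw [hC x y, mulVec_add] at hΦ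
      rw [sub_mulVec, one_mulVec, ← mulVec_mulVec]
      nth_rewrite 1 [hΦ]
      simp only [LinearMap.add_apply, LinearMap.comp_apply, toLin'_apply]
      abel
    have hDC : D * C = 1 := (sub_eq_zero.1 (funext fun j =>
      hΦ ((1 - D * C) j) ⟨LinearMap.proj (R := K) (φ := fun _ : ι => K) j ∘ₗ (toLin' D ∘ₗ F + G),
        fun x y => congrFun (hrow x y) j⟩)).symm
    refine ⟨.ofLinearMap (toLin' C) (toLin' D) ?_ ?_, F, fun x y => hC x y⟩
    · rw [← toLin'_mul, mul_eq_one_comm.1 hDC, toLin'_one]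
    · rw [← toLin'_mul, hDC, toLin'_one]

end Coordinates

theorem stmt4_general (A : Type*) [NonUnitalNonAssocCommRing A] [Module ℂ A]
    (s : ℕ)
    (θ ϑ : Fin s → (A →ₗ[ℂ] A →ₗ[ℂ] ℂ))
    (hθann : ∀ x : A, (∀ i y, θ i x y = 0) → (∀ y, x * y = 0) → x = 0)
    (hϑann : ∀ x : A, (∀ i y, ϑ i x y = 0) → (∀ y, x * y = 0) → x = 0)
    (hϑind : ∀ c : Fin s → ℂ,
      (∃ f : A →ₗ[ℂ] ℂ, ∀ x y : A, (∑ i, c i * ϑ i x y) = f (x * y)) → c = 0) :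
    (∃ E : (A × (Fin s → ℂ)) ≃ₗ[ℂ] (A × (Fin s → ℂ)),
       ∀ p q : A × (Fin s → ℂ),
         E (p.1 * q.1, fun i => θ i p.1 q.1)
           = ((E p).1 * (E q).1, fun i => ϑ i (E p).1 (E q).1)) ↔
    (∃ e : A ≃ₗ[ℂ] A, (∀ x y : A, e (x * y) = e x * e y) ∧
      (∀ i, ∃ (c : Fin s → ℂ) (f : A →ₗ[ℂ] ℂ),
        ∀ x y : A, θ i (e x) (e y) = (∑ j, c j * ϑ j x y) + f (x * y)) ∧
      (∀ j, ∃ (c : Fin s → ℂ) (f : A →ₗ[ℂ] ℂ),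
        ∀ x y : A, ϑ j x y = (∑ i, c i * θ i (e x) (e y)) + f (x * y))) := by
  refine (exists_isCentralExtensionIso_iff (θ := LinearMap.pi₂ θ) (ϑ := LinearMap.pi₂ ϑ)
    (fun x hx => hθann x fun i y => congrFun (hx y) i)
    (fun x hx => hϑann x fun i y => congrFun (hx y) i)).trans
    (exists_congr fun e => and_congr_right fun _ => ?_)
  exact (exists_linearEquiv_iff_exists_mulVec_and_exists_mulVec hϑind).trans
    (and_congr (forall_exists_sum_add_iff_exists_mulVec_add _ _).symm
      (forall_exists_sum_add_iff_exists_mulVec_add _ _).symm)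

/-- Isomorphism criterion for central extensions (Lemma on `Aut(A)`-orbits): with
`θ = Σ θᵢ eᵢ`, `ϑ = Σ ϑᵢ eᵢ` symmetric cocycles with `Ann(θ) ∩ Ann(A) = 0`,
`Ann(ϑ) ∩ Ann(A) = 0` and the classes `[θᵢ]` (resp. `[ϑᵢ]`) linearly independent in
`H²(A,ℂ)`, the central extensions `A_θ` and `A_ϑ` are isomorphic iff there is an algebra
automorphism `e` of `A` such that the subspaces of `H²(A,ℂ)` spanned by the classes
`[θᵢ ∘ (e × e)]` and by the classes `[ϑᵢ]` coincide (each family lies in the span of the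
other modulo coboundaries `B²(A,ℂ)`). -/
theorem stmt4 (A : Type*) [NonUnitalNonAssocCommRing A] [Module ℂ A]
    [SMulCommClass ℂ A A] [IsScalarTower ℂ A A] [FiniteDimensional ℂ A]
    (s : ℕ)
    (θ ϑ : Fin s → (A →ₗ[ℂ] A →ₗ[ℂ] ℂ))
    (hθsymm : ∀ i x y, θ i x y = θ i y x)
    (hϑsymm : ∀ i x y, ϑ i x y = ϑ i y x)
    (hθann : ∀ x : A, (∀ i y, θ i x y = 0) → (∀ y, x * y = 0) → x = 0)
    (hϑann : ∀ x : A, (∀ i y, ϑ i x y = 0) → (∀ y, x * y = 0) → x = 0)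
    (hθind : ∀ c : Fin s → ℂ,
      (∃ f : A →ₗ[ℂ] ℂ, ∀ x y : A, (∑ i, c i * θ i x y) = f (x * y)) → c = 0)
    (hϑind : ∀ c : Fin s → ℂ,
      (∃ f : A →ₗ[ℂ] ℂ, ∀ x y : A, (∑ i, c i * ϑ i x y) = f (x * y)) → c = 0) :
    (∃ E : (A × (Fin s → ℂ)) ≃ₗ[ℂ] (A × (Fin s → ℂ)),
       ∀ p q : A × (Fin s → ℂ),
         E (p.1 * q.1, fun i => θ i p.1 q.1)
           = ((E p).1 * (E q).1, fun i => ϑ i (E p).1 (E q).1)) ↔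
    (∃ e : A ≃ₗ[ℂ] A, (∀ x y : A, e (x * y) = e x * e y) ∧
      (∀ i, ∃ (c : Fin s → ℂ) (f : A →ₗ[ℂ] ℂ),
        ∀ x y : A, θ i (e x) (e y) = (∑ j, c j * ϑ j x y) + f (x * y)) ∧
      (∀ j, ∃ (c : Fin s → ℂ) (f : A →ₗ[ℂ] ℂ),
        ∀ x y : A, ϑ j x y = (∑ i, c i * θ i (e x) (e y)) + f (x * y))) :=
  stmt4_general A s θ ϑ hθann hϑann hϑind
end

section
/- Let A be a finite-dimensional commutative ℂ-algebra, V an s-dimensional ℂ-vector space with basis e₁, …, e_s, and θ ∈ Z²(A, V) written θ(x, y) = Σᵢ θᵢ(x, y) eᵢ with θᵢ ∈ Z²(A, ℂ). Assume Ann(θ) ∩ Ann(A) = 0. Then the central extension A_θ has a nonzero annihilator component if and only if the classes [θ₁], …, [θ_s] are linearly dependent in H²(A, ℂ). -/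
/-!
If `A_θ = B₀ ⊕ I` with `0 ≠ I ⊆ Ann(A_θ)`, the hypothesis `Ann(θ) ∩ Ann(A) = 0` forces `I ⊆ V`.
Hence `B₀` projects onto `A`, and since a product in `A_θ` only depends on the `A`-components of
its factors, `B₀` contains every product. A functional vanishing on `B₀` but not on `I ⊆ V` then
reads `g (x, v) = ∑ cᵢ vᵢ - f x` with `c ≠ 0`, and vanishing on products says `∑ cᵢ θᵢ = δf`.
Conversely, such a relation defines a functional `g` vanishing on all products but not on `V`;
its kernel is a subalgebra, complemented by any line of `V` on which `g` does not vanish.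
-/

open LinearMap Submodule

lemma Submodule.map_eq_range_of_isCompl {R M N : Type*} [Ring R] [AddCommGroup M] [Module R M]
    [AddCommGroup N] [Module R N] {p q : Submodule R M} (h : IsCompl p q) {f : M →ₗ[R] N}
    (hq : q ≤ ker f) : p.map f = range f := by
  rw [← map_top, ← h.sup_eq_top, map_sup, le_ker_iff_map.mp hq, sup_bot_eq]

namespace CentralExtension

variable {K A ι : Type*} [Field K] [NonUnitalNonAssocRing A] [Module K A]

/-- The multiplication of `A_θ = A ⊕ K^ι`. -/
def mul (θ : ι → A →ₗ[K] A →ₗ[K] K) (p q : A × (ι → K)) : A × (ι → K) :=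
  (p.1 * q.1, fun i => θ i p.1 q.1)

variable {θ : ι → A →ₗ[K] A →ₗ[K] K}

lemma mul_congr {p p' q q' : A × (ι → K)} (hp : p.1 = p'.1) (hq : q.1 = q'.1) :
    mul θ p q = mul θ p' q' := by
  simp only [mul, hp, hq]

lemma mul_eq_zero_of_fst_eq_zero {p : A × (ι → K)} (hp : p.1 = 0) (q : A × (ι → K)) :
    mul θ p q = 0 := by
  ext <;> simp [mul, hp]

lemma fst_eq_zero_of_forall_mul_eq_zero
    (hθann : ∀ x : A, (∀ i y, θ i x y = 0) → (∀ y, x * y = 0) → x = 0)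
    {p : A × (ι → K)} (hp : ∀ q, mul θ p q = 0) : p.1 = 0 :=
  hθann p.1 (fun i y => congrFun (congrArg Prod.snd (hp (y, 0))) i)
    fun y => congrArg Prod.fst (hp (y, 0))

lemma exists_dual_of_isCompl {B₀ I : Submodule K (A × (ι → K))} (hI : I ≠ ⊥)
    (hIfst : I ≤ ker (fst K A (ι → K))) (hB₀ : ∀ p ∈ B₀, ∀ q ∈ B₀, mul θ p q ∈ B₀)
    (h : IsCompl B₀ I) :
    ∃ g : Module.Dual K (A × (ι → K)), g ∘ₗ inr K A (ι → K) ≠ 0 ∧ ∀ p q, g (mul θ p q) = 0 := by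
  obtain ⟨p, hpI, hp0⟩ := (Submodule.ne_bot_iff I).mp hI
  have hpB₀ : p ∉ B₀ := fun hpB₀ => hp0 (disjoint_def.mp h.disjoint p hpB₀ hpI)
  obtain ⟨g, hgp, hgB₀⟩ := exists_dual_map_eq_bot_of_notMem hpB₀ inferInstance
  have hlift (x : A) : ∃ b ∈ B₀, b.1 = x := by
    have hx : x ∈ B₀.map (fst K A (ι → K)) := by
      rw [map_eq_range_of_isCompl h hIfst, range_fst]
      exact mem_top
    exact mem_map.mp hx
  refine ⟨g, fun hg => hgp ?_, fun p q => ?_⟩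
  · have hp : p = inr K A (ι → K) p.2 := Prod.ext (hIfst hpI) rfl
    rw [hp, ← comp_apply, hg, LinearMap.zero_apply]
  · obtain ⟨b, hb, hbp⟩ := hlift p.1
    obtain ⟨b', hb', hbq⟩ := hlift q.1
    rw [← mul_congr hbp hbq]
    exact le_ker_iff_map.mpr hgB₀ (hB₀ b hb b' hb')

lemma exists_isCompl_of_dual {g : Module.Dual K (A × (ι → K))} (hg : g ∘ₗ inr K A (ι → K) ≠ 0)
    (hmul : ∀ p q, g (mul θ p q) = 0) :
    ∃ B₀ I : Submodule K (A × (ι → K)), I ≠ ⊥ ∧ (∀ p ∈ I, ∀ q, mul θ p q = 0) ∧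
      (∀ p ∈ B₀, ∀ q ∈ B₀, mul θ p q ∈ B₀) ∧ IsCompl B₀ I := by
  obtain ⟨v, hv⟩ : ∃ v, g (inr K A (ι → K) v) ≠ 0 := by
    by_contra! h
    exact hg (LinearMap.ext h)
  refine ⟨ker g, K ∙ inr K A (ι → K) v, ?_, fun p hp q => ?_, fun p _ q _ => hmul p q, ?_⟩
  · rw [Ne, span_singleton_eq_bot]
    exact fun h0 => hv (by rw [h0, map_zero])
  · obtain ⟨a, rfl⟩ := mem_span_singleton.mp hp
    exact mul_eq_zero_of_fst_eq_zero (by simp) q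
  · exact isCompl_span_singleton_of_isCoatom_of_notMem
      (isCoatom_ker_of_surjective (surjective_of_ne_zero (fun h => hv (by simp [h])))) hv

lemma exists_isCompl_iff_exists_dual
    (hθann : ∀ x : A, (∀ i y, θ i x y = 0) → (∀ y, x * y = 0) → x = 0) :
    (∃ B₀ I : Submodule K (A × (ι → K)), I ≠ ⊥ ∧ (∀ p ∈ I, ∀ q, mul θ p q = 0) ∧
      (∀ p ∈ B₀, ∀ q ∈ B₀, mul θ p q ∈ B₀) ∧ IsCompl B₀ I) ↔
    ∃ g : Module.Dual K (A × (ι → K)), g ∘ₗ inr K A (ι → K) ≠ 0 ∧ ∀ p q, g (mul θ p q) = 0 :=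
  ⟨fun ⟨_, _, hI, hIann, hB₀, h⟩ => exists_dual_of_isCompl hI
      (fun _ hp => fst_eq_zero_of_forall_mul_eq_zero hθann (hIann _ hp)) hB₀ h,
    fun ⟨_, hg, hmul⟩ => exists_isCompl_of_dual hg hmul⟩

lemma neg_coprod_linearCombination_apply_mul [Fintype ι] (c : ι → K) (f : A →ₗ[K] K) (p q : A × (ι → K)) :
    (-f).coprod (Fintype.linearCombination K c) (mul θ p q) =
      ∑ i, c i * θ i p.1 q.1 - f (p.1 * q.1) := by
  simp [mul, Fintype.linearCombination_apply, mul_comm, sub_eq_neg_add]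

lemma exists_dual_iff_exists_coboundary [Fintype ι] :
    (∃ g : Module.Dual K (A × (ι → K)), g ∘ₗ inr K A (ι → K) ≠ 0 ∧ ∀ p q, g (mul θ p q) = 0) ↔
    ∃ c : ι → K, c ≠ 0 ∧ ∃ f : A →ₗ[K] K, ∀ x y, ∑ i, c i * θ i x y = f (x * y) := by
  classical
  constructor
  · rintro ⟨g, hg, hmul⟩
    set c : ι → K := fun i => g (inr K A (ι → K) (Pi.single i 1))
    set f : A →ₗ[K] K := -(g ∘ₗ inl K A (ι → K))
    have hg_eq : g = (-f).coprod (Fintype.linearCombination K c) := by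
      ext i <;> simp [c, f]
    refine ⟨c, fun hc => hg ?_, f, fun x y => ?_⟩
    · rw [hg_eq, coprod_inr, hc]
      ext
      simp [Fintype.linearCombination_apply]
    · have h := hmul (x, 0) (y, 0)
      rwa [hg_eq, neg_coprod_linearCombination_apply_mul, sub_eq_zero] at h
  · rintro ⟨c, hc, f, hf⟩
    refine ⟨(-f).coprod (Fintype.linearCombination K c), ?_, fun p q => ?_⟩
    · intro h
      refine hc (funext fun i => ?_)
      simpa using congr($h (Pi.single i 1))
    · rw [neg_coprod_linearCombination_apply_mul, hf, sub_self]

end CentralExtension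

theorem stmt5_general (A : Type*) [NonUnitalNonAssocCommRing A] [Module ℂ A]
    (s : ℕ) (θ : Fin s → (A →ₗ[ℂ] A →ₗ[ℂ] ℂ))
    (hθann : ∀ x : A, (∀ i y, θ i x y = 0) → (∀ y, x * y = 0) → x = 0) :
    (∃ (B₀ I : Submodule ℂ (A × (Fin s → ℂ))),
       I ≠ ⊥ ∧
       (∀ p ∈ I, ∀ q : A × (Fin s → ℂ),
         ((p.1 * q.1, fun i => θ i p.1 q.1) : A × (Fin s → ℂ)) = 0) ∧
       (∀ p ∈ B₀, ∀ q ∈ B₀,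
         ((p.1 * q.1, fun i => θ i p.1 q.1) : A × (Fin s → ℂ)) ∈ B₀) ∧
       IsCompl B₀ I) ↔
    (∃ c : Fin s → ℂ, c ≠ 0 ∧
      ∃ f : A →ₗ[ℂ] ℂ, ∀ x y : A, (∑ i, c i * θ i x y) = f (x * y)) :=
  (CentralExtension.exists_isCompl_iff_exists_dual hθann).trans
    CentralExtension.exists_dual_iff_exists_coboundary

/-- With `θ = Σ θᵢ eᵢ` a symmetric cocycle satisfying `Ann(θ) ∩ Ann(A) = 0`, the central
extension `A_θ` has a nonzero annihilator component (a nonzero subspace `I` of the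
annihilator of `A_θ` with `A_θ = B₀ ⊕ I` for some subalgebra `B₀`) iff the classes
`[θ₁], …, [θ_s]` are linearly dependent in `H²(A,ℂ)`, i.e. some nontrivial linear
combination of the `θᵢ` is a coboundary. -/
theorem stmt5 (A : Type*) [NonUnitalNonAssocCommRing A] [Module ℂ A]
    [SMulCommClass ℂ A A] [IsScalarTower ℂ A A] [FiniteDimensional ℂ A]
    (s : ℕ) (θ : Fin s → (A →ₗ[ℂ] A →ₗ[ℂ] ℂ))
    (hθsymm : ∀ i x y, θ i x y = θ i y x)
    (hθann : ∀ x : A, (∀ i y, θ i x y = 0) → (∀ y, x * y = 0) → x = 0) :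
    (∃ (B₀ I : Submodule ℂ (A × (Fin s → ℂ))),
       I ≠ ⊥ ∧
       (∀ p ∈ I, ∀ q : A × (Fin s → ℂ),
         ((p.1 * q.1, fun i => θ i p.1 q.1) : A × (Fin s → ℂ)) = 0) ∧
       (∀ p ∈ B₀, ∀ q ∈ B₀,
         ((p.1 * q.1, fun i => θ i p.1 q.1) : A × (Fin s → ℂ)) ∈ B₀) ∧
       IsCompl B₀ I) ↔
    (∃ c : Fin s → ℂ, c ≠ 0 ∧
      ∃ f : A →ₗ[ℂ] ℂ, ∀ x y : A, (∑ i, c i * θ i x y) = f (x * y)) :=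
  stmt5_general A s θ hθann
end

section
/- Let D be a commutative ℂ-algebra satisfying the CD identity, V a ℂ-vector space, and θ : D × D → V a symmetric bilinear map. Then the central extension D_θ satisfies the CD identity if and only if θ satisfies the CD-cocycle condition, i.e., θ((xy)a, b) + θ((xb)a, y) + θ(x, (yb)a) = θ((xy)b, a) + θ((xa)b, y) + θ(x, (ya)b) for all x, y, a, b ∈ D. -/
/-- The multiplication of the central extension `A_θ`:
`(x,u)(y,v) = (xy, θ x y)`. -/
def extMul {D V : Type*} [NonUnitalNonAssocRing D] [Module ℂ D]
    [AddCommGroup V] [Module ℂ V]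
    (θ : D →ₗ[ℂ] D →ₗ[ℂ] V) (p q : D × V) : D × V :=
  (p.1 * q.1, θ p.1 q.1)

@[simp]
theorem extMul_fst {D V : Type*} [NonUnitalNonAssocRing D] [Module ℂ D]
    [AddCommGroup V] [Module ℂ V] (θ : D →ₗ[ℂ] D →ₗ[ℂ] V) (p q : D × V) :
    (extMul θ p q).1 = p.1 * q.1 := rfl

@[simp]
theorem extMul_snd {D V : Type*} [NonUnitalNonAssocRing D] [Module ℂ D]
    [AddCommGroup V] [Module ℂ V] (θ : D →ₗ[ℂ] D →ₗ[ℂ] V) (p q : D × V) :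
    (extMul θ p q).2 = θ p.1 q.1 := rfl

theorem stmt7_general (D : Type*) [NonUnitalNonAssocCommRing D] [Module ℂ D]
    (V : Type*) [AddCommGroup V] [Module ℂ V]
    (hCD : ∀ x y a b : D,
      ((x * y) * a) * b + ((x * b) * a) * y + x * ((y * b) * a)
        = ((x * y) * b) * a + ((x * a) * b) * y + x * ((y * a) * b))
    (θ : D →ₗ[ℂ] D →ₗ[ℂ] V) :
    (∀ x y a b : D × V,
      extMul θ (extMul θ (extMul θ x y) a) b
        + extMul θ (extMul θ (extMul θ x b) a) y
        + extMul θ x (extMul θ (extMul θ y b) a)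
      = extMul θ (extMul θ (extMul θ x y) b) a
        + extMul θ (extMul θ (extMul θ x a) b) y
        + extMul θ x (extMul θ (extMul θ y a) b)) ↔
    (∀ x y a b : D,
      θ ((x * y) * a) b + θ ((x * b) * a) y + θ x ((y * b) * a)
        = θ ((x * y) * b) a + θ ((x * a) * b) y + θ x ((y * a) * b)) := by
  constructor
  · intro h x y a b
    simpa using congrArg Prod.snd (h (x, 0) (y, 0) (a, 0) (b, 0))
  · intro h x y a b
    -- `extMul` ignores `V`-components: the identity splits into CD in `D` and the cocycle condition.
    ext
    · simpa using hCD x.1 y.1 a.1 b.1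
    · simpa using h x.1 y.1 a.1 b.1

/-- For a commutative `ℂ`-algebra `D` satisfying the CD identity and a symmetric bilinear
map `θ`, the central extension `D_θ` satisfies the CD identity iff `θ` satisfies the
CD-cocycle condition. -/
theorem stmt7 (D : Type*) [NonUnitalNonAssocCommRing D] [Module ℂ D]
    [SMulCommClass ℂ D D] [IsScalarTower ℂ D D]
    (V : Type*) [AddCommGroup V] [Module ℂ V]
    (hCD : ∀ x y a b : D,
      ((x * y) * a) * b + ((x * b) * a) * y + x * ((y * b) * a)
        = ((x * y) * b) * a + ((x * a) * b) * y + x * ((y * a) * b))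
    (θ : D →ₗ[ℂ] D →ₗ[ℂ] V) (hθsymm : ∀ x y, θ x y = θ y x) :
    (∀ x y a b : D × V,
      extMul θ (extMul θ (extMul θ x y) a) b
        + extMul θ (extMul θ (extMul θ x b) a) y
        + extMul θ x (extMul θ (extMul θ y b) a)
      = extMul θ (extMul θ (extMul θ x y) b) a
        + extMul θ (extMul θ (extMul θ x a) b) y
        + extMul θ x (extMul θ (extMul θ y a) b)) ↔
    (∀ x y a b : D,
      θ ((x * y) * a) b + θ ((x * b) * a) y + θ x ((y * b) * a)
        = θ ((x * y) * b) a + θ ((x * a) * b) y + θ x ((y * a) * b)) :=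
  stmt7_general D V hCD θ
end

section
/- Let A be the 3-dimensional commutative ℂ-algebra with basis e₁, e₂, e₃ and nonzero products e₁e₁ = e₂ and e₁e₂ = e₂e₁ = e₃ (all other products of basis vectors are zero). Then a ℂ-linear map φ : A → A is an algebra automorphism of A if and only if there exist x, y, z ∈ ℂ with x ≠ 0 such that φ(e₁) = x e₁ + y e₂ + z e₃, φ(e₂) = x² e₂ + 2xy e₃, and φ(e₃) = x³ e₃. -/
/-- The multiplication of the 3-dimensional commutative algebra with
`e₁e₁ = e₂`, `e₁e₂ = e₂e₁ = e₃` (all other products of basis vectors zero),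
on the carrier `Fin 3 → ℂ`. -/
def mulA (u v : Fin 3 → ℂ) : Fin 3 → ℂ :=
  ![0, u 0 * v 0, u 0 * v 1 + u 1 * v 0]

lemma vec_eta (u : Fin 3 → ℂ) : u = ![u 0, u 1, u 2] := by
  funext i; fin_cases i <;> rfl

lemma vec_decomp (u : Fin 3 → ℂ) :
    u = u 0 • ![(1:ℂ), 0, 0] + u 1 • ![0, 1, 0] + u 2 • ![0, 0, 1] := by
  funext i; fin_cases i <;> simp

/-- A linear map `φ` of the algebra `e₁e₁ = e₂, e₁e₂ = e₃` is an algebra automorphism iff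
`φ(e₁) = x e₁ + y e₂ + z e₃`, `φ(e₂) = x² e₂ + 2xy e₃`, `φ(e₃) = x³ e₃` for some
`x, y, z ∈ ℂ` with `x ≠ 0`. -/
theorem stmt10 (φ : (Fin 3 → ℂ) →ₗ[ℂ] (Fin 3 → ℂ)) :
    (Function.Bijective φ ∧ ∀ u v : Fin 3 → ℂ, φ (mulA u v) = mulA (φ u) (φ v)) ↔
    (∃ x y z : ℂ, x ≠ 0 ∧
      φ ![1, 0, 0] = ![x, y, z] ∧
      φ ![0, 1, 0] = ![0, x ^ 2, 2 * x * y] ∧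
      φ ![0, 0, 1] = ![0, 0, x ^ 3]) := by
  constructor
  · rintro ⟨hbij, hm⟩
    set a := φ ![1, 0, 0] 0 with ha
    set b := φ ![1, 0, 0] 1 with hb
    set c := φ ![1, 0, 0] 2 with hc
    have h2 : φ ![0, 1, 0] = ![0, a * a, a * b + b * a] := by
      have := hm ![1, 0, 0] ![1, 0, 0]
      have h1 : mulA ![(1:ℂ), 0, 0] ![1, 0, 0] = ![0, 1, 0] := by
        funext i; fin_cases i <;> simp [mulA]
      rw [h1] at this
      rw [this]
      funext i; fin_cases i <;> simp [mulA] <;> rfl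
    have h3 : φ ![0, 0, 1] = ![0, 0, a * (a * a)] := by
      have := hm ![1, 0, 0] ![0, 1, 0]
      have h1 : mulA ![(1:ℂ), 0, 0] ![0, 1, 0] = ![0, 0, 1] := by
        funext i; fin_cases i <;> simp [mulA]
      rw [h1, h2] at this
      rw [this]
      funext i; fin_cases i <;> simp [mulA] <;> exact Or.inl rfl
    have hane : a ≠ 0 := by
      intro h0
      have : φ ![0, 1, 0] = φ 0 := by
        rw [h2, map_zero, h0]
        funext i; fin_cases i <;> simp
      have := hbij.1 this
      have := congrFun this 1
      simp at this
    refine ⟨a, b, c, hane, ?_, ?_, ?_⟩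
    · exact vec_eta _
    · rw [h2]; congr 1 <;> ring
    · rw [h3]; congr 1; ring
  · rintro ⟨x, y, z, hx, h1, h2, h3⟩
    have hφ : ∀ u : Fin 3 → ℂ, φ u =
        ![u 0 * x, u 0 * y + u 1 * x ^ 2, u 0 * z + u 1 * (2 * x * y) + u 2 * x ^ 3] := by
      intro u
      calc φ u = φ (u 0 • ![1, 0, 0] + u 1 • ![0, 1, 0] + u 2 • ![0, 0, 1]) := by
              rw [← vec_decomp]
        _ = u 0 • φ ![1, 0, 0] + u 1 • φ ![0, 1, 0] + u 2 • φ ![0, 0, 1] := by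
              rw [map_add, map_add, map_smul, map_smul, map_smul]
        _ = _ := by
              rw [h1, h2, h3]; funext i; fin_cases i <;> simp <;> ring
    constructor
    · have hinj : Function.Injective φ := by
        rw [injective_iff_map_eq_zero]
        intro u hu
        have h0 := congrFun (hφ u ▸ hu) 0
        have h1' := congrFun (hφ u ▸ hu) 1
        have h2' := congrFun (hφ u ▸ hu) 2
        simp at h0 h1' h2'
        have hu0 : u 0 = 0 := by
          rcases h0 with h | h
          · exact h
          · exact absurd h hx
        rw [hu0] at h1' h2'
        simp [pow_eq_zero_iff, hx] at h1'
        rw [h1'] at h2'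
        simp [pow_eq_zero_iff, hx] at h2'
        rw [vec_decomp u, hu0, h1', h2']
        funext i; fin_cases i <;> simp
      exact ⟨hinj, LinearMap.surjective_of_injective hinj⟩
    · intro u v
      rw [hφ, hφ, hφ]
      funext i; fin_cases i <;> simp [mulA] <;> ring
end

section
/- Let A be the 3-dimensional commutative ℂ-algebra with basis e₁, e₂, e₃ and nonzero products e₁e₁ = e₂ and e₁e₂ = e₂e₁ = e₃ (all other products of basis vectors are zero). Then a symmetric bilinear form θ : A × A → ℂ belongs to B²(A, ℂ) if and only if θ(e₁, e₃) = θ(e₂, e₂) = θ(e₂, e₃) = θ(e₃, e₃) = 0. Consequently the quotient H²(A, ℂ) = Z²(A, ℂ)/B²(A, ℂ) has dimension 4, with basis the classes [Δ₁₃], [Δ₂₂], [Δ₂₃], [Δ₃₃]. -/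
noncomputable section

open scoped Matrix

/-- `Z²(A, ℂ)`, the space of symmetric bilinear forms on `A`, realized as the space of
symmetric `3 × 3` matrices (the Gram matrix of a form; the form attached to a matrix `M`
is `(u, v) ↦ u ⬝ᵥ M *ᵥ v`). -/
def Z2 : Submodule ℂ (Matrix (Fin 3) (Fin 3) ℂ) where
  carrier := {M | ∀ i j, M i j = M j i}
  add_mem' := by
    intro a b ha hb i j
    simp [Matrix.add_apply, ha i j, hb i j]
  zero_mem' := by intro i j; simp
  smul_mem' := by
    intro c M hM i j
    simp [Matrix.smul_apply, hM i j]

/-- `B²(A, ℂ)`: the matrices whose associated bilinear form is a coboundary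
`δf(u, v) = f (uv)` for a linear functional `f`. -/
def B2 : Submodule ℂ (Matrix (Fin 3) (Fin 3) ℂ) where
  carrier :=
    {M | ∃ f : (Fin 3 → ℂ) →ₗ[ℂ] ℂ, ∀ u v : Fin 3 → ℂ, u ⬝ᵥ M.mulVec v = f (mulA u v)}
  add_mem' := by
    rintro a b ⟨f, hf⟩ ⟨g, hg⟩
    refine ⟨f + g, fun u v => ?_⟩
    simp [Matrix.add_mulVec, dotProduct_add, hf u v, hg u v]
  zero_mem' := ⟨0, fun u v => by simp [Matrix.zero_mulVec]⟩
  smul_mem' := by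
    rintro c M ⟨f, hf⟩
    refine ⟨c • f, fun u v => ?_⟩
    simp [Matrix.smul_mulVec, dotProduct_smul, hf u v]

/-- `B²(A, ℂ)` viewed inside `Z²(A, ℂ)`. -/
def B2' : Submodule ℂ Z2 := B2.comap Z2.subtype

/-- `H²(A, ℂ) = Z²(A, ℂ) / B²(A, ℂ)`. -/
abbrev H2 := Z2 ⧸ B2'

/-- The symmetric bilinear form `Δ₁₃` (as a symmetric matrix). -/
def D13 : Z2 :=
  ⟨!![0,0,1; 0,0,0; 1,0,0], by intro i j; fin_cases i <;> fin_cases j <;> rfl⟩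

/-- The symmetric bilinear form `Δ₂₂` (as a symmetric matrix). -/
def D22 : Z2 :=
  ⟨!![0,0,0; 0,1,0; 0,0,0], by intro i j; fin_cases i <;> fin_cases j <;> rfl⟩

/-- The symmetric bilinear form `Δ₂₃` (as a symmetric matrix). -/
def D23 : Z2 :=
  ⟨!![0,0,0; 0,0,1; 0,1,0], by intro i j; fin_cases i <;> fin_cases j <;> rfl⟩

/-- The symmetric bilinear form `Δ₃₃` (as a symmetric matrix). -/
def D33 : Z2 :=
  ⟨!![0,0,0; 0,0,0; 0,0,1], by intro i j; fin_cases i <;> fin_cases j <;> rfl⟩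

/-- The classes `[Δ₁₃], [Δ₂₂], [Δ₂₃], [Δ₃₃]` in `H²(A, ℂ)`. -/
def fam : Fin 4 → H2 :=
  ![Submodule.Quotient.mk D13, Submodule.Quotient.mk D22,
    Submodule.Quotient.mk D23, Submodule.Quotient.mk D33]

/-!
A symmetric form `θ` is a coboundary `δf` exactly when it vanishes on the pairs of basis
vectors whose product is zero, namely `(e₁,e₃), (e₂,e₂), (e₂,e₃), (e₃,e₃)`: the remaining
values `θ(e₁,e₁), θ(e₁,e₂)` are then matched by choosing `f(e₂), f(e₃)`. Hence the four
corresponding Gram matrix entries give a surjection `Z² → ℂ⁴` with kernel `B²`, which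
identifies `H²` with `ℂ⁴` and sends `[Δ₁₃], [Δ₂₂], [Δ₂₃], [Δ₃₃]` to the standard basis.
-/

open Matrix

@[simp] lemma single_zero_fin3 : (Pi.single 0 1 : Fin 3 → ℂ) = ![1, 0, 0] := by
  ext i; fin_cases i <;> rfl

@[simp] lemma single_one_fin3 : (Pi.single 1 1 : Fin 3 → ℂ) = ![0, 1, 0] := by
  ext i; fin_cases i <;> rfl

@[simp] lemma single_two_fin3 : (Pi.single 2 1 : Fin 3 → ℂ) = ![0, 0, 1] := by
  ext i; fin_cases i <;> rfl

lemma mulA_e1_e3 : mulA ![1, 0, 0] ![0, 0, 1] = 0 := by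
  ext i; fin_cases i <;> simp [mulA]

lemma mulA_e2_e2 : mulA ![0, 1, 0] ![0, 1, 0] = 0 := by
  ext i; fin_cases i <;> simp [mulA]

lemma mulA_e2_e3 : mulA ![0, 1, 0] ![0, 0, 1] = 0 := by
  ext i; fin_cases i <;> simp [mulA]

lemma mulA_e3_e3 : mulA ![0, 0, 1] ![0, 0, 1] = 0 := by
  ext i; fin_cases i <;> simp [mulA]

lemma dotProduct_mulVec_single {m n R : Type*} [Fintype m] [Fintype n] [DecidableEq m]
    [DecidableEq n] [NonAssocSemiring R] (M : Matrix m n R) (i : m) (j : n) :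
    Pi.single i 1 ⬝ᵥ M *ᵥ Pi.single j 1 = M i j := by
  rw [mulVec_single_one, single_one_dotProduct, col_apply]

lemma mem_B2_iff {M : Matrix (Fin 3) (Fin 3) ℂ} (hM : ∀ i j, M i j = M j i) :
    M ∈ B2 ↔ M 0 2 = 0 ∧ M 1 1 = 0 ∧ M 1 2 = 0 ∧ M 2 2 = 0 := by
  constructor
  · rintro ⟨f, hf⟩
    have entry_eq (i j : Fin 3) : M i j = f (mulA (Pi.single i 1) (Pi.single j 1)) := by
      rw [← hf, dotProduct_mulVec_single]
    refine ⟨?_, ?_, ?_, ?_⟩ <;>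
      simp [entry_eq, mulA_e1_e3, mulA_e2_e2, mulA_e2_e3, mulA_e3_e3]
  · rintro ⟨h02, h11, h12, h22⟩
    refine ⟨M 0 0 • LinearMap.proj 1 + M 0 1 • LinearMap.proj 2, fun u v => ?_⟩
    simp [dotProduct, mulVec, Fin.sum_univ_three, mulA, hM 1 0, hM 2 0, hM 2 1, h02, h11, h12, h22]
    ring

theorem exists_coboundary_iff (θ : (Fin 3 → ℂ) →ₗ[ℂ] (Fin 3 → ℂ) →ₗ[ℂ] ℂ)
    (hθ : ∀ u v, θ u v = θ v u) :
    (∃ f : (Fin 3 → ℂ) →ₗ[ℂ] ℂ, ∀ u v, θ u v = f (mulA u v)) ↔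
      θ ![1,0,0] ![0,0,1] = 0 ∧ θ ![0,1,0] ![0,1,0] = 0 ∧
        θ ![0,1,0] ![0,0,1] = 0 ∧ θ ![0,0,1] ![0,0,1] = 0 := by
  set M := LinearMap.toMatrix₂' ℂ θ
  have hθM (u v : Fin 3 → ℂ) : θ u v = u ⬝ᵥ M *ᵥ v := by
    rw [← toLinearMap₂'_apply', toLinearMap₂'_toMatrix']
  have hM (i j : Fin 3) : M i j = M j i := by simp only [M, LinearMap.toMatrix₂'_apply, hθ]
  simp only [← single_zero_fin3, ← single_one_fin3, ← single_two_fin3, hθM,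
    dotProduct_mulVec_single]
  exact mem_B2_iff hM

/-- The entries `θ(e₁,e₃), θ(e₂,e₂), θ(e₂,e₃), θ(e₃,e₃)` of a symmetric Gram matrix. -/
def gramCoords : Z2 →ₗ[ℂ] (Fin 4 → ℂ) where
  toFun M := ![M.1 0 2, M.1 1 1, M.1 1 2, M.1 2 2]
  map_add' M N := by ext k; fin_cases k <;> simp
  map_smul' c M := by ext k; fin_cases k <;> simp

lemma ker_gramCoords : LinearMap.ker gramCoords = B2' := by
  ext ⟨M, hM⟩
  rw [LinearMap.mem_ker, B2', Submodule.mem_comap, Submodule.subtype_apply, mem_B2_iff hM]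
  simp [gramCoords, funext_iff, Fin.forall_fin_succ]

def deltas : Fin 4 → Z2 := ![D13, D22, D23, D33]

lemma gramCoords_deltas (k : Fin 4) : gramCoords (deltas k) = Pi.single k 1 := by
  ext l; fin_cases k <;> fin_cases l <;> simp [gramCoords, deltas, D13, D22, D23, D33]

lemma gramCoords_surjective : Function.Surjective gramCoords := fun w =>
  ⟨∑ k, w k • deltas k, by simp [map_sum, gramCoords_deltas, ← pi_eq_sum_univ']⟩

def h2EquivCoords : H2 ≃ₗ[ℂ] (Fin 4 → ℂ) :=
  (Submodule.quotEquivOfEq _ _ ker_gramCoords.symm).trans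
    (gramCoords.quotKerEquivOfSurjective gramCoords_surjective)

lemma ofEquivFun_h2EquivCoords : ⇑(Module.Basis.ofEquivFun h2EquivCoords) = fam := by
  ext k
  rw [Module.Basis.coe_ofEquivFun, LinearEquiv.symm_apply_eq, ← gramCoords_deltas]
  fin_cases k <;> rfl

/-- For the algebra `e₁e₁ = e₂, e₁e₂ = e₃`: a symmetric bilinear form `θ` belongs to
`B²(A, ℂ)` iff `θ(e₁,e₃) = θ(e₂,e₂) = θ(e₂,e₃) = θ(e₃,e₃) = 0`; consequently
`H²(A, ℂ) = Z²(A, ℂ)/B²(A, ℂ)` has dimension `4`, with basis the classes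
`[Δ₁₃], [Δ₂₂], [Δ₂₃], [Δ₃₃]`. -/
theorem stmt11 :
    (∀ θ : (Fin 3 → ℂ) →ₗ[ℂ] (Fin 3 → ℂ) →ₗ[ℂ] ℂ, (∀ u v, θ u v = θ v u) →
      ((∃ f : (Fin 3 → ℂ) →ₗ[ℂ] ℂ, ∀ u v, θ u v = f (mulA u v)) ↔
        (θ ![1,0,0] ![0,0,1] = 0 ∧ θ ![0,1,0] ![0,1,0] = 0 ∧
         θ ![0,1,0] ![0,0,1] = 0 ∧ θ ![0,0,1] ![0,0,1] = 0))) ∧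
    Module.finrank ℂ H2 = 4 ∧
    LinearIndependent ℂ fam ∧
    Submodule.span ℂ (Set.range fam) = ⊤ := by
  set b := Module.Basis.ofEquivFun h2EquivCoords
  have hb : ⇑b = fam := ofEquivFun_h2EquivCoords
  refine ⟨exists_coboundary_iff, ?_, hb ▸ b.linearIndependent, hb ▸ b.span_eq⟩
  simpa using Module.finrank_eq_card_basis b
end
end

section
/- Let A be the 3-dimensional commutative ℂ-algebra with basis e₁, e₂, e₃ and nonzero products e₁e₁ = e₂ and e₁e₂ = e₂e₁ = e₃ (all other products of basis vectors are zero). Then a symmetric bilinear form θ : A × A → ℂ satisfies the CD-cocycle condition if and only if θ(e₂, e₃) = 0 and θ(e₃, e₃) = 0. -/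
lemma mulA_mulA (x y a : Fin 3 → ℂ) :
    mulA (mulA x y) a = (x 0 * y 0 * a 0) • ![0, 0, 1] := by
  funext i
  fin_cases i <;> simp [mulA]

section LinearForm

variable {R : Type*} [CommRing R]

lemma linearForm_apply_eq_mul_apply_e₁ (f : (Fin 3 → R) →ₗ[R] R)
    (h₂ : f ![0, 1, 0] = 0) (h₃ : f ![0, 0, 1] = 0) (v : Fin 3 → R) :
    f v = v 0 * f ![1, 0, 0] := by
  have hv : v = v 0 • ![1, 0, 0] + v 1 • ![0, 1, 0] + v 2 • ![0, 0, 1] := by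
    funext i
    fin_cases i <;> simp
  conv_lhs => rw [hv]
  simp only [map_add, map_smul, smul_eq_mul, h₂, h₃, mul_zero, add_zero]

lemma forall_mul_linearForm_comm_iff (f : (Fin 3 → R) →ₗ[R] R) :
    (∀ a b : Fin 3 → R, a 0 * f b = b 0 * f a) ↔ f ![0, 1, 0] = 0 ∧ f ![0, 0, 1] = 0 := by
  constructor
  · intro h
    exact ⟨by simpa using h ![1, 0, 0] ![0, 1, 0], by simpa using h ![1, 0, 0] ![0, 0, 1]⟩
  · rintro ⟨h₂, h₃⟩ a b
    rw [linearForm_apply_eq_mul_apply_e₁ f h₂ h₃ a, linearForm_apply_eq_mul_apply_e₁ f h₂ h₃ b]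
    ring

end LinearForm

lemma cocycle_identity_iff (θ : (Fin 3 → ℂ) →ₗ[ℂ] (Fin 3 → ℂ) →ₗ[ℂ] ℂ) (x y a b : Fin 3 → ℂ) :
    θ (mulA (mulA x y) a) b + θ (mulA (mulA x b) a) y + θ x (mulA (mulA y b) a)
        = θ (mulA (mulA x y) b) a + θ (mulA (mulA x a) b) y + θ x (mulA (mulA y a) b) ↔
      x 0 * y 0 * (a 0 * θ ![0, 0, 1] b) = x 0 * y 0 * (b 0 * θ ![0, 0, 1] a) := by
  simp only [mulA_mulA, map_smul, LinearMap.smul_apply, smul_eq_mul]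
  constructor <;> intro h <;> linear_combination h

lemma forall_cocycle_identity_iff (θ : (Fin 3 → ℂ) →ₗ[ℂ] (Fin 3 → ℂ) →ₗ[ℂ] ℂ) :
    (∀ x y a b : Fin 3 → ℂ,
      θ (mulA (mulA x y) a) b + θ (mulA (mulA x b) a) y + θ x (mulA (mulA y b) a)
        = θ (mulA (mulA x y) b) a + θ (mulA (mulA x a) b) y + θ x (mulA (mulA y a) b)) ↔
      ∀ a b : Fin 3 → ℂ, a 0 * θ ![0, 0, 1] b = b 0 * θ ![0, 0, 1] a := by
  simp only [cocycle_identity_iff]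
  constructor
  · intro h a b
    simpa using h ![1, 0, 0] ![1, 0, 0] a b
  · intro h x y a b
    rw [h]

/-- A symmetric bilinear form `θ` on the algebra `e₁e₁ = e₂, e₁e₂ = e₃` satisfies the
CD-cocycle condition iff `θ(e₂,e₃) = 0` and `θ(e₃,e₃) = 0`. -/
theorem stmt12 (θ : (Fin 3 → ℂ) →ₗ[ℂ] (Fin 3 → ℂ) →ₗ[ℂ] ℂ)
    (hsymm : ∀ u v, θ u v = θ v u) :
    (∀ x y a b : Fin 3 → ℂ,
      θ (mulA (mulA x y) a) b + θ (mulA (mulA x b) a) y + θ x (mulA (mulA y b) a)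
        = θ (mulA (mulA x y) b) a + θ (mulA (mulA x a) b) y + θ x (mulA (mulA y a) b)) ↔
    (θ ![0, 1, 0] ![0, 0, 1] = 0 ∧ θ ![0, 0, 1] ![0, 0, 1] = 0) := by
  rw [forall_cocycle_identity_iff, forall_mul_linearForm_comm_iff, hsymm]
end

section
/- Let A be the 4-dimensional commutative ℂ-algebra with basis e₁, e₂, e₃, e₄ and nonzero products e₁e₁ = e₂ and e₂e₃ = e₃e₂ = e₄ (all other products of basis vectors are zero). Then a ℂ-linear map φ : A → A is an algebra automorphism of A if and only if there exist x, r, s, t ∈ ℂ with x ≠ 0 and r ≠ 0 such that φ(e₁) = x e₁ + t e₄, φ(e₂) = x² e₂, φ(e₃) = r e₃ + s e₄, and φ(e₄) = x²r e₄. -/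
/-!
Write `a = φ e₁` and `c = φ e₃`. Multiplicativity gives `φ e₂ = a²` and `φ e₄ = a² c`, together
with the relations `a · a² = 0`, `a c = 0`, `c² = 0`. Injectivity makes `φ e₄ = a² c` nonzero, which
forces `a 0 ≠ 0` and `c 2 ≠ 0` (coordinates indexed by `Fin 4`), and then the three relations
kill every coordinate of `a` and `c` except `a 0, a 3, c 2, c 3`. Conversely, the linear map with the stated values is given by an explicit
lower triangular matrix with nonzero diagonal, and it is multiplicative by a direct computation.
-/

/-- The multiplication of the 4-dimensional commutative algebra with
`e₁e₁ = e₂`, `e₂e₃ = e₃e₂ = e₄` (all other products of basis vectors zero),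
on the carrier `Fin 4 → ℂ`. -/
def mulC (u v : Fin 4 → ℂ) : Fin 4 → ℂ :=
  ![0, u 0 * v 0, 0, u 1 * v 2 + u 2 * v 1]

theorem exists_eq_of_mulC_relations {a c : Fin 4 → ℂ} (hne : mulC (mulC a a) c ≠ 0)
    (haa : mulC a (mulC a a) = 0) (hac : mulC a c = 0) (hcc : mulC c c = 0) :
    ∃ x t r s : ℂ, x ≠ 0 ∧ r ≠ 0 ∧ a = ![x, 0, 0, t] ∧ c = ![0, 0, r, s] := by
  have hxr : a 0 * a 0 * c 2 ≠ 0 := by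
    contrapose! hne
    ext i; fin_cases i <;> simp [mulC, hne]
  have hx : a 0 ≠ 0 := left_ne_zero_of_mul (left_ne_zero_of_mul hxr)
  have hr : c 2 ≠ 0 := right_ne_zero_of_mul hxr
  have ha2 : a 2 = 0 := by simpa [mulC, hx] using congrFun haa 3
  have ha1 : a 1 = 0 := by simpa [mulC, ha2, hr] using congrFun hac 3
  have hc0 : c 0 = 0 := by simpa [mulC, hx] using congrFun hac 1
  have hc1 : c 1 = 0 := by simpa [mulC, hr, mul_comm (c 2)] using congrFun hcc 3
  refine ⟨a 0, a 3, c 2, c 3, hx, hr, ?_, ?_⟩ <;> ext i <;> fin_cases i <;> simp [ha1, ha2, hc0, hc1]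

def autC (x r s t : ℂ) : (Fin 4 → ℂ) →ₗ[ℂ] (Fin 4 → ℂ) where
  toFun w := ![x * w 0, x ^ 2 * w 1, r * w 2, t * w 0 + s * w 2 + x ^ 2 * r * w 3]
  map_add' u v := by ext i; fin_cases i <;> simp <;> ring
  map_smul' c u := by ext i; fin_cases i <;> simp <;> ring

theorem autC_apply (x r s t : ℂ) (w : Fin 4 → ℂ) :
    autC x r s t w = ![x * w 0, x ^ 2 * w 1, r * w 2, t * w 0 + s * w 2 + x ^ 2 * r * w 3] :=
  rfl

theorem autC_mulC (x r s t : ℂ) (u v : Fin 4 → ℂ) :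
    autC x r s t (mulC u v) = mulC (autC x r s t u) (autC x r s t v) := by
  ext i; fin_cases i <;> simp [autC_apply, mulC] <;> ring

theorem autC_bijective {x r : ℂ} (hx : x ≠ 0) (hr : r ≠ 0) (s t : ℂ) :
    Function.Bijective (autC x r s t) := by
  have hinj : Function.Injective (autC x r s t) := by
    refine (injective_iff_map_eq_zero _).mpr fun w hw ↦ ?_
    have h0 : w 0 = 0 := by simpa [autC_apply, hx] using congrFun hw 0
    have h1 : w 1 = 0 := by simpa [autC_apply, hx] using congrFun hw 1
    have h2 : w 2 = 0 := by simpa [autC_apply, hr] using congrFun hw 2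
    have h3 : w 3 = 0 := by simpa [autC_apply, hx, hr, h0, h2] using congrFun hw 3
    ext i; fin_cases i <;> simp [h0, h1, h2, h3]
  exact ⟨hinj, LinearMap.injective_iff_surjective.mp hinj⟩

theorem eq_autC_of_apply_basis (φ : (Fin 4 → ℂ) →ₗ[ℂ] (Fin 4 → ℂ)) (x r s t : ℂ)
    (h0 : φ ![1, 0, 0, 0] = ![x, 0, 0, t])
    (h1 : φ ![0, 1, 0, 0] = ![0, x ^ 2, 0, 0])
    (h2 : φ ![0, 0, 1, 0] = ![0, 0, r, s])
    (h3 : φ ![0, 0, 0, 1] = ![0, 0, 0, x ^ 2 * r]) :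
    φ = autC x r s t := by
  refine LinearMap.ext fun w ↦ ?_
  have hw : w = w 0 • ![1, 0, 0, 0] + w 1 • ![0, 1, 0, 0] + w 2 • ![0, 0, 1, 0] +
      w 3 • ![0, 0, 0, 1] := by
    ext i; fin_cases i <;> simp
  rw [hw]
  simp only [map_add, map_smul, h0, h1, h2, h3, autC_apply]
  ext i; fin_cases i <;> simp

/-- A linear map `φ` of the algebra `e₁e₁ = e₂, e₂e₃ = e₄` is an algebra automorphism iff
`φ(e₁) = x e₁ + t e₄`, `φ(e₂) = x² e₂`, `φ(e₃) = r e₃ + s e₄`, `φ(e₄) = x²r e₄` for some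
`x, r, s, t ∈ ℂ` with `x ≠ 0` and `r ≠ 0`. -/
theorem stmt14 (φ : (Fin 4 → ℂ) →ₗ[ℂ] (Fin 4 → ℂ)) :
    (Function.Bijective φ ∧ ∀ u v : Fin 4 → ℂ, φ (mulC u v) = mulC (φ u) (φ v)) ↔
    (∃ x r s t : ℂ, x ≠ 0 ∧ r ≠ 0 ∧
      φ ![1, 0, 0, 0] = ![x, 0, 0, t] ∧
      φ ![0, 1, 0, 0] = ![0, x ^ 2, 0, 0] ∧
      φ ![0, 0, 1, 0] = ![0, 0, r, s] ∧
      φ ![0, 0, 0, 1] = ![0, 0, 0, x ^ 2 * r]) := by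
  constructor
  · rintro ⟨hbij, hmul⟩
    have hmap {u v w} (h : mulC u v = w) : mulC (φ u) (φ v) = φ w := h ▸ (hmul u v).symm
    have he2 : mulC (φ ![1, 0, 0, 0]) (φ ![1, 0, 0, 0]) = φ ![0, 1, 0, 0] := hmap (by simp [mulC])
    have he4 : mulC (φ ![0, 1, 0, 0]) (φ ![0, 0, 1, 0]) = φ ![0, 0, 0, 1] := hmap (by simp [mulC])
    have haa : mulC (φ ![1, 0, 0, 0]) (φ ![0, 1, 0, 0]) = φ 0 := hmap (by simp [mulC])
    have hac : mulC (φ ![1, 0, 0, 0]) (φ ![0, 0, 1, 0]) = φ 0 := hmap (by simp [mulC])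
    have hcc : mulC (φ ![0, 0, 1, 0]) (φ ![0, 0, 1, 0]) = φ 0 := hmap (by simp [mulC])
    have hne : φ ![0, 0, 0, 1] ≠ 0 := (map_ne_zero_iff φ hbij.injective).mpr (by simp)
    rw [map_zero] at haa hac hcc
    rw [← he2] at haa he4
    rw [← he4] at hne
    obtain ⟨x, t, r, s, hx, hr, ha, hc⟩ := exists_eq_of_mulC_relations hne haa hac hcc
    refine ⟨x, r, s, t, hx, hr, ha, ?_, hc, ?_⟩
    · rw [← he2, ha]; ext i; fin_cases i <;> simp [mulC, sq]
    · rw [← he4, ha, hc]; ext i; fin_cases i <;> simp [mulC, sq]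
  · rintro ⟨x, r, s, t, hx, hr, h0, h1, h2, h3⟩
    obtain rfl := eq_autC_of_apply_basis φ x r s t h0 h1 h2 h3
    exact ⟨autC_bijective hx hr s t, autC_mulC x r s t⟩
end

section
/- Let N be the 5-dimensional commutative ℂ-algebra with basis e₁, …, e₅ and nonzero products e₁e₁ = e₂, e₁e₂ = e₂e₁ = e₃, e₁e₃ = e₃e₁ = e₄, e₂e₂ = e₅, e₃e₃ = e₅ (all other products of basis vectors are zero). Then N is a nilpotent commutative algebra, and N does not satisfy the CD identity; in particular, ((e₁e₁)e₁)e₃ + ((e₁e₃)e₁)e₁ + e₁((e₁e₃)e₁) = e₅ ≠ 0 = ((e₁e₁)e₃)e₁ + ((e₁e₁)e₃)e₁ + e₁((e₁e₁)e₃). -/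
/-- The multiplication of the 5-dimensional commutative algebra `N` with
`e₁e₁ = e₂`, `e₁e₂ = e₂e₁ = e₃`, `e₁e₃ = e₃e₁ = e₄`, `e₂e₂ = e₅`, `e₃e₃ = e₅`
(all other products of basis vectors zero), on the carrier `Fin 5 → ℂ`. -/
def mulN (u v : Fin 5 → ℂ) : Fin 5 → ℂ :=
  ![0, u 0 * v 0, u 0 * v 1 + u 1 * v 0, u 0 * v 2 + u 2 * v 0, u 1 * v 1 + u 2 * v 2]

/-- `IsWord n x` holds iff `x` is a product (in some association) of exactly `n` elements
of the algebra; thus `Nⁿ = span {x | IsWord n x}`, and `N` is nilpotent iff all such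
products vanish for some `n`. -/
inductive IsWord : ℕ → (Fin 5 → ℂ) → Prop
  | single (x : Fin 5 → ℂ) : IsWord 1 x
  | mul {m n : ℕ} {x y : Fin 5 → ℂ} : IsWord m x → IsWord n y → IsWord (m + n) (mulN x y)

/-! Every product of `n` elements of `N` lies in `Nⁿ`, which is cut out by the vanishing of the
coordinates of level `< n`, where `eᵢ` has level `1, 2, 3, 4, 6`: each structure constant
`eⱼ eₖ = eᵢ` satisfies `level j + level k ≤ level i`. As all levels are below `7`, `N⁷ = 0`.
The CD identity fails at `x = y = a = e₁`, `b = e₃`, by a direct computation. -/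

def mulN_level : Fin 5 → ℕ := ![1, 2, 3, 4, 6]

theorem mulN_comm (u v : Fin 5 → ℂ) : mulN u v = mulN v u := by
  funext i; fin_cases i <;> simp [mulN] <;> ring

theorem mul_apply_eq_zero_of_level_lt {m n : ℕ} {u v : Fin 5 → ℂ}
    (hu : ∀ j, mulN_level j < m → u j = 0) (hv : ∀ k, mulN_level k < n → v k = 0)
    {j k : Fin 5} (hjk : mulN_level j + mulN_level k < m + n) : u j * v k = 0 := by
  rcases lt_or_ge (mulN_level j) m with hj | hj
  · rw [hu j hj, zero_mul]
  · rw [hv k (by omega), mul_zero]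

theorem IsWord.apply_eq_zero_of_level_lt {n : ℕ} {x : Fin 5 → ℂ} (hx : IsWord n x) :
    ∀ i, mulN_level i < n → x i = 0 := by
  induction hx with
  | single x => intro i hi; fin_cases i <;> simp [mulN_level] at hi
  | @mul m n u v _ _ hu hv =>
    have h {j k : Fin 5} (hjk : mulN_level j + mulN_level k < m + n) : u j * v k = 0 :=
      mul_apply_eq_zero_of_level_lt hu hv hjk
    intro i hi
    fin_cases i <;> simp only [mulN_level] at hi
    · rfl
    · exact h (j := 0) (k := 0) hi
    · show u 0 * v 1 + u 1 * v 0 = 0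
      rw [h (j := 0) (k := 1) hi, h (j := 1) (k := 0) hi, add_zero]
    · show u 0 * v 2 + u 2 * v 0 = 0
      rw [h (j := 0) (k := 2) hi, h (j := 2) (k := 0) hi, add_zero]
    · show u 1 * v 1 + u 2 * v 2 = 0
      rw [h (j := 1) (k := 1) (lt_of_le_of_lt (by decide) hi), h (j := 2) (k := 2) hi, add_zero]

theorem IsWord.eq_zero_of_seven {x : Fin 5 → ℂ} (hx : IsWord 7 x) : x = 0 := by
  funext i
  exact hx.apply_eq_zero_of_level_lt i (by fin_cases i <;> simp [mulN_level])

def cdLeft (x y a b : Fin 5 → ℂ) : Fin 5 → ℂ :=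
  mulN (mulN (mulN x y) a) b + mulN (mulN (mulN x b) a) y + mulN x (mulN (mulN y b) a)

def cdRight (x y a b : Fin 5 → ℂ) : Fin 5 → ℂ :=
  mulN (mulN (mulN x y) b) a + mulN (mulN (mulN x a) b) y + mulN x (mulN (mulN y a) b)

local notation "e₁" => (![1, 0, 0, 0, 0] : Fin 5 → ℂ)
local notation "e₃" => (![0, 0, 1, 0, 0] : Fin 5 → ℂ)
local notation "e₅" => (![0, 0, 0, 0, 1] : Fin 5 → ℂ)

theorem cdLeft_e₁_e₃ : cdLeft e₁ e₁ e₁ e₃ = e₅ := by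
  funext i; fin_cases i <;> simp [cdLeft, mulN]

theorem cdRight_e₁_e₃ : cdRight e₁ e₁ e₁ e₃ = 0 := by
  funext i; fin_cases i <;> simp [cdRight, mulN]

theorem e₅_ne_zero : e₅ ≠ 0 := fun h => by simpa using congrFun h 4

/-- The algebra `N` is a nilpotent commutative algebra which does not satisfy the CD
identity; in particular `((e₁e₁)e₁)e₃ + ((e₁e₃)e₁)e₁ + e₁((e₁e₃)e₁) = e₅ ≠ 0
= ((e₁e₁)e₃)e₁ + ((e₁e₁)e₃)e₁ + e₁((e₁e₁)e₃)`. -/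
theorem stmt16 :
    (∀ u v : Fin 5 → ℂ, mulN u v = mulN v u) ∧
    (∃ n : ℕ, 1 ≤ n ∧ ∀ x : Fin 5 → ℂ, IsWord n x → x = 0) ∧
    ¬(∀ x y a b : Fin 5 → ℂ,
      mulN (mulN (mulN x y) a) b + mulN (mulN (mulN x b) a) y + mulN x (mulN (mulN y b) a)
        = mulN (mulN (mulN x y) b) a + mulN (mulN (mulN x a) b) y
            + mulN x (mulN (mulN y a) b)) ∧
    (mulN (mulN (mulN ![1,0,0,0,0] ![1,0,0,0,0]) ![1,0,0,0,0]) ![0,0,1,0,0]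
        + mulN (mulN (mulN ![1,0,0,0,0] ![0,0,1,0,0]) ![1,0,0,0,0]) ![1,0,0,0,0]
        + mulN ![1,0,0,0,0] (mulN (mulN ![1,0,0,0,0] ![0,0,1,0,0]) ![1,0,0,0,0])
      = ![0,0,0,0,1]) ∧
    (![0,0,0,0,1] : Fin 5 → ℂ) ≠ 0 ∧
    (mulN (mulN (mulN ![1,0,0,0,0] ![1,0,0,0,0]) ![0,0,1,0,0]) ![1,0,0,0,0]
        + mulN (mulN (mulN ![1,0,0,0,0] ![1,0,0,0,0]) ![0,0,1,0,0]) ![1,0,0,0,0]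
        + mulN ![1,0,0,0,0] (mulN (mulN ![1,0,0,0,0] ![1,0,0,0,0]) ![0,0,1,0,0])
      = 0) := by
  have not_cd : cdLeft e₁ e₁ e₁ e₃ ≠ cdRight e₁ e₁ e₁ e₃ := by
    rw [cdLeft_e₁_e₃, cdRight_e₁_e₃]
    exact e₅_ne_zero
  exact ⟨mulN_comm, ⟨7, by norm_num, fun _ => IsWord.eq_zero_of_seven⟩,
    fun h => not_cd (h _ _ _ _), cdLeft_e₁_e₃, e₅_ne_zero, cdRight_e₁_e₃⟩
end
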